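/- arXiv:0712.2202 — 2 statements merged into one kernel-verified Lean document; each statement's English description precedes it below -/
import Mathlib

section
/- Let F_s : ℝ⁴ → ℝ² be the wrinkling deformation F_s(t,x,y,z) = (t² − x² + y² − z² + st, 2tx + 2yz). Then the critical point set of F_s is exactly {(t,x,y,z) : x² + t² + (s/2)t = 0, y = 0, z = 0}. For s ≠ 0 this set is a circle of radius |s|/4 centered at (t,x) = (−s/4, 0) in the plane y = z = 0, and for s = 0 it is the single point 0. -/
/-!
The Jacobian of `F_s` at `(t, x, y, z)` splits into a `(t, x)`-block
`[[2t + s, -2x], [2x, 2t]]`, of determinant `4 (x² + t² + (s/2) t)`, and a `(y, z)`-block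
`[[2y, -2z], [2z, 2y]]`, which is multiplication by `2 (y + i z)` on `ℂ ≅ ℝ²`. If either block is
invertible the Jacobian is onto `ℝ²`. If both are singular, then `y = z = 0` and the image is the
image of the singular `(t, x)`-block, a proper subspace.
-/

/-- The wrinkling deformation `F_s(t,x,y,z) = (t² − x² + y² − z² + st, 2tx + 2yz)`. -/
noncomputable def wrinkleModel (s : ℝ) : ℝ × ℝ × ℝ × ℝ → ℝ × ℝ :=
  fun p => (p.1 ^ 2 - p.2.1 ^ 2 + p.2.2.1 ^ 2 - p.2.2.2 ^ 2 + s * p.1,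
            2 * p.1 * p.2.1 + 2 * p.2.2.1 * p.2.2.2)

theorem LinearMap.rank_lt_rank_iff_not_surjective {K V W : Type*} [DivisionRing K]
    [AddCommGroup V] [Module K V] [AddCommGroup W] [Module K W] [FiniteDimensional K W]
    (f : V →ₗ[K] W) : f.rank < Module.rank K W ↔ ¬ Function.Surjective f := by
  rw [← range_eq_top, LinearMap.rank, ← Module.finrank_eq_rank, ← Module.finrank_eq_rank,
    Nat.cast_lt]
  exact ⟨fun h htop => (htop ▸ h).ne (finrank_top K W), Submodule.finrank_lt⟩

noncomputable def wrinkleJacobian (s t x y z : ℝ) : (ℝ × ℝ × ℝ × ℝ) →L[ℝ] ℝ × ℝ :=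
  LinearMap.toContinuousLinearMap
    { toFun := fun v => ((2 * t + s) * v.1 - 2 * x * v.2.1 + 2 * y * v.2.2.1 - 2 * z * v.2.2.2,
                         2 * x * v.1 + 2 * t * v.2.1 + 2 * z * v.2.2.1 + 2 * y * v.2.2.2)
      map_add' := fun _ _ => by ext <;> simp <;> ring
      map_smul' := fun _ _ => by ext <;> simp <;> ring }

@[simp]
theorem wrinkleJacobian_apply (s t x y z : ℝ) (v : ℝ × ℝ × ℝ × ℝ) :
    wrinkleJacobian s t x y z v =
      ((2 * t + s) * v.1 - 2 * x * v.2.1 + 2 * y * v.2.2.1 - 2 * z * v.2.2.2,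
        2 * x * v.1 + 2 * t * v.2.1 + 2 * z * v.2.2.1 + 2 * y * v.2.2.2) :=
  rfl

theorem hasFDerivAt_wrinkleModel (s t x y z : ℝ) :
    HasFDerivAt (wrinkleModel s) (wrinkleJacobian s t x y z) (t, x, y, z) := by
  set q : ℝ × ℝ × ℝ × ℝ := (t, x, y, z)
  have ht := (ContinuousLinearMap.fst ℝ ℝ (ℝ × ℝ × ℝ)).hasFDerivAt (x := q)
  have hx := ((ContinuousLinearMap.fst ℝ ℝ (ℝ × ℝ)).comp
    (ContinuousLinearMap.snd ℝ ℝ (ℝ × ℝ × ℝ))).hasFDerivAt (x := q)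
  have hy := ((ContinuousLinearMap.fst ℝ ℝ ℝ).comp ((ContinuousLinearMap.snd ℝ ℝ (ℝ × ℝ)).comp
    (ContinuousLinearMap.snd ℝ ℝ (ℝ × ℝ × ℝ)))).hasFDerivAt (x := q)
  have hz := ((ContinuousLinearMap.snd ℝ ℝ ℝ).comp ((ContinuousLinearMap.snd ℝ ℝ (ℝ × ℝ)).comp
    (ContinuousLinearMap.snd ℝ ℝ (ℝ × ℝ × ℝ)))).hasFDerivAt (x := q)
  have h := (((((ht.mul ht).sub (hx.mul hx)).add (hy.mul hy)).sub (hz.mul hz)).add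
    (ht.const_mul s)).prodMk (((ht.mul hx).const_mul 2).add ((hy.mul hz).const_mul 2))
  refine (h.congr_fderiv ?_).congr_of_eventuallyEq (.of_forall fun p => ?_)
  · ext <;> simp [q] <;> ring
  · ext <;> simp [wrinkleModel] <;> ring

section Surjectivity

variable {s t x y z : ℝ}

theorem wrinkleJacobian_surjective_of_sq_add_sq_ne_zero (h : y ^ 2 + z ^ 2 ≠ 0) :
    Function.Surjective (wrinkleJacobian s t x y z) := by
  rintro ⟨a, b⟩
  refine ⟨(0, 0, (y * a + z * b) / (2 * (y ^ 2 + z ^ 2)), (y * b - z * a) / (2 * (y ^ 2 + z ^ 2))),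
    ?_⟩
  ext <;> simp only [wrinkleJacobian_apply] <;> field_simp <;> ring

theorem wrinkleJacobian_surjective_of_sq_add_sq_add_mul_ne_zero
    (h : x ^ 2 + t ^ 2 + s / 2 * t ≠ 0) :
    Function.Surjective (wrinkleJacobian s t x y z) := by
  rintro ⟨a, b⟩
  set D := 2 * x ^ 2 + 2 * t ^ 2 + s * t with hD
  have hD0 : D ≠ 0 := fun h0 => h (by linear_combination h0 / 2)
  refine ⟨((t * a + x * b) / D, ((2 * t + s) * b - 2 * x * a) / (2 * D), 0, 0), ?_⟩
  ext <;> simp only [wrinkleJacobian_apply] <;> field_simp <;> rw [hD] <;> ring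

theorem wrinkleJacobian_not_surjective (h : x ^ 2 + t ^ 2 + s / 2 * t = 0) :
    ¬ Function.Surjective (wrinkleJacobian s t x 0 0) := by
  -- `(t, x)` spans the left kernel of the singular `(t, x)`-block
  have key : ∀ v, t * (wrinkleJacobian s t x 0 0 v).1 + x * (wrinkleJacobian s t x 0 0 v).2
      = 0 := fun v => by
    simp only [wrinkleJacobian_apply]
    linear_combination 2 * v.1 * h
  intro hsurj
  obtain ⟨v, hv⟩ := hsurj (1, 0)
  obtain ⟨w, hw⟩ := hsurj (0, 1)
  have ht : t = 0 := by simpa [hv] using key v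
  have hx : x = 0 := by simpa [hw] using key w
  simpa [ht, hx] using congrArg Prod.snd hw

theorem wrinkleJacobian_surjective_iff :
    Function.Surjective (wrinkleJacobian s t x y z) ↔
      ¬ (x ^ 2 + t ^ 2 + s / 2 * t = 0 ∧ y = 0 ∧ z = 0) := by
  refine ⟨?_, fun h => ?_⟩
  · rintro hsurj ⟨h, rfl, rfl⟩
    exact wrinkleJacobian_not_surjective h hsurj
  · by_cases hd : x ^ 2 + t ^ 2 + s / 2 * t = 0
    · refine wrinkleJacobian_surjective_of_sq_add_sq_ne_zero fun hyz => h ⟨hd, ?_, ?_⟩ <;>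
        nlinarith [sq_nonneg y, sq_nonneg z]
    · exact wrinkleJacobian_surjective_of_sq_add_sq_add_mul_ne_zero hd

end Surjectivity

theorem setOf_rank_fderiv_wrinkleModel_lt_two (s : ℝ) :
    {p : ℝ × ℝ × ℝ × ℝ | LinearMap.rank (fderiv ℝ (wrinkleModel s) p).toLinearMap < 2} =
      {p : ℝ × ℝ × ℝ × ℝ |
        p.2.1 ^ 2 + p.1 ^ 2 + (s / 2) * p.1 = 0 ∧ p.2.2.1 = 0 ∧ p.2.2.2 = 0} := by
  ext ⟨t, x, y, z⟩
  have hrank : Module.rank ℝ (ℝ × ℝ) = 2 := by rw [rank_prod']; norm_num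
  rw [Set.mem_ofPred_eq, (hasFDerivAt_wrinkleModel s t x y z).fderiv, ← hrank,
    LinearMap.rank_lt_rank_iff_not_surjective, ContinuousLinearMap.coe_coe,
    wrinkleJacobian_surjective_iff, not_not]
  rfl

/-- The critical point set of the wrinkling deformation is
`{x² + t² + (s/2)t = 0, y = z = 0}`; for `s ≠ 0` this is the circle of radius
`|s|/4` centered at `(t,x) = (−s/4, 0)` in the plane `y = z = 0`, and for `s = 0`
it is the single point `0`. -/
theorem stmt5 (s : ℝ) :
    {p : ℝ × ℝ × ℝ × ℝ | LinearMap.rank (fderiv ℝ (wrinkleModel s) p).toLinearMap < 2} =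
      {p : ℝ × ℝ × ℝ × ℝ |
        p.2.1 ^ 2 + p.1 ^ 2 + (s / 2) * p.1 = 0 ∧ p.2.2.1 = 0 ∧ p.2.2.2 = 0} ∧
    (s ≠ 0 →
      {p : ℝ × ℝ × ℝ × ℝ | LinearMap.rank (fderiv ℝ (wrinkleModel s) p).toLinearMap < 2} =
        {p : ℝ × ℝ × ℝ × ℝ |
          (p.1 - (-s / 4)) ^ 2 + (p.2.1 - 0) ^ 2 = (|s| / 4) ^ 2 ∧
            p.2.2.1 = 0 ∧ p.2.2.2 = 0}) ∧
    (s = 0 →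
      {p : ℝ × ℝ × ℝ × ℝ | LinearMap.rank (fderiv ℝ (wrinkleModel s) p).toLinearMap < 2} =
        {((0 : ℝ), (0 : ℝ), (0 : ℝ), (0 : ℝ))}) := by
  rw [setOf_rank_fderiv_wrinkleModel_lt_two]
  refine ⟨rfl, fun _ => ?_, fun hs => ?_⟩
  · ext ⟨t, x, y, z⟩
    refine and_congr_left fun _ => ?_
    constructor <;> intro h
    · linear_combination h - (1 / 16) * sq_abs s
    · linear_combination h + (1 / 16) * sq_abs s
  · subst hs
    ext ⟨t, x, y, z⟩
    simp only [Set.mem_ofPred_eq, Set.mem_singleton_iff, Prod.mk.injEq]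
    constructor
    · rintro ⟨h, rfl, rfl⟩
      exact ⟨by nlinarith, by nlinarith, rfl, rfl⟩
    · rintro ⟨rfl, rfl, rfl, rfl⟩
      norm_num
end

section
/- For the wrinkling map F_s with s ≠ 0, the critical value set of F_s is the parametrized closed curve θ ↦ (−(s²/8)(1 + cos θ)(2 − cos θ), −(s²/8)(1 + cos θ) sin θ), θ ∈ [0, 2π]; that is, F_s maps the critical circle, parametrized by t = −(s/4)(1 + cos θ), x = (s/4) sin θ, y = z = 0, onto this curve. -/
/-! The differential of `F_s` at `(t, x, y, z)` sends the coordinate vectors to `(2t + s, 2x)`,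
`(-2x, 2t)`, `(2y, 2z)` and `(-2z, 2y)`. The last two have determinant `4(y² + z²)`, and when
`y = z = 0` the first two have determinant `4(t² + x² + st/2)`; where this vanishes too, the
covector `(t, x)` (or `(0, 1)` at the origin) kills the image. So the critical set is the circle
`y = z = 0, (t + s/4)² + x² = (s/4)²`, which the angle `θ ∈ [0, 2π]` parametrizes, and
substituting the parametrization into `F_s` gives the curve. -/

open Real

namespace LinearMap

open Module

variable {K M : Type*} [Field K] [AddCommGroup M] [Module K M]

theorem rank_lt_two_of_forall_mul_add_mul_eq_zero {L : M →ₗ[K] K × K} {a b : K}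
    (hab : (a, b) ≠ 0) (h : ∀ v, a * (L v).1 + b * (L v).2 = 0) : L.rank < 2 := by
  set φ : K × K →ₗ[K] K := a • fst K K K + b • snd K K K
  have hφ : φ ≠ 0 := by
    intro hφ
    have ha : a = 0 := by simpa [φ] using LinearMap.congr_fun hφ (1, 0)
    have hb : b = 0 := by simpa [φ] using LinearMap.congr_fun hφ (0, 1)
    exact hab (by simp [ha, hb])
  have hker : finrank K (ker φ) < 2 := by
    simpa using Submodule.finrank_lt (mt ker_eq_top.1 hφ)
  have hrange : range L ≤ ker φ := by
    rintro _ ⟨v, rfl⟩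
    simpa [φ] using h v
  calc L.rank = finrank K (range L) := (finrank_eq_rank K _).symm
    _ ≤ finrank K (ker φ) := by exact_mod_cast Submodule.finrank_mono hrange
    _ < 2 := by exact_mod_cast hker

theorem two_le_rank_of_det_ne_zero {L : M →ₗ[K] K × K} (v w : M)
    (h : (L v).1 * (L w).2 - (L v).2 * (L w).1 ≠ 0) : 2 ≤ L.rank := by
  have hli : LinearIndependent K ![L v, L w] := by
    refine LinearIndependent.pair_iff.2 fun a b hab => ?_
    have h1 : a * (L v).1 + b * (L w).1 = 0 := by simpa using congrArg Prod.fst hab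
    have h2 : a * (L v).2 + b * (L w).2 = 0 := by simpa using congrArg Prod.snd hab
    constructor
    · refine (mul_eq_zero.1 ?_).resolve_right h
      linear_combination (L w).2 * h1 - (L w).1 * h2
    · refine (mul_eq_zero.1 ?_).resolve_right h
      linear_combination (L v).1 * h2 - (L v).2 * h1
  calc (2 : Cardinal) = Module.rank K (Submodule.span K (Set.range ![L v, L w])) := by
        rw [← finrank_eq_rank, finrank_span_eq_card hli]; norm_num
    _ ≤ L.rank := Submodule.rank_mono <| Submodule.span_le.2 <| by
        rintro _ ⟨i, rfl⟩
        fin_cases i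
        exacts [⟨v, rfl⟩, ⟨w, rfl⟩]

end LinearMap

theorem fderiv_wrinkleModel_apply (s : ℝ) (p v : ℝ × ℝ × ℝ × ℝ) :
    fderiv ℝ (wrinkleModel s) p v =
      ((2 * p.1 + s) * v.1 - 2 * p.2.1 * v.2.1 + 2 * p.2.2.1 * v.2.2.1 - 2 * p.2.2.2 * v.2.2.2,
        2 * p.2.1 * v.1 + 2 * p.1 * v.2.1 + 2 * p.2.2.2 * v.2.2.1 + 2 * p.2.2.1 * v.2.2.2) := by
  have ht := hasFDerivAt_fst (𝕜 := ℝ) (p := p)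
  have hx := (hasFDerivAt_snd (𝕜 := ℝ) (p := p)).fst
  have hy := (hasFDerivAt_snd (𝕜 := ℝ) (p := p)).snd.fst
  have hz := (hasFDerivAt_snd (𝕜 := ℝ) (p := p)).snd.snd
  have H : HasFDerivAt (wrinkleModel s) _ p :=
    (((((ht.pow 2).sub (hx.pow 2)).add (hy.pow 2)).sub (hz.pow 2)).add (ht.const_mul s)).prodMk
      (((ht.const_mul 2).mul hx).add ((hy.const_mul 2).mul hz))
  rw [H.fderiv]
  ext <;> simp <;> ring

theorem two_le_rank_fderiv_wrinkleModel {s t x y z : ℝ}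
    (h : ¬(y = 0 ∧ z = 0 ∧ t ^ 2 + x ^ 2 + s / 2 * t = 0)) :
    2 ≤ (fderiv ℝ (wrinkleModel s) (t, x, y, z)).toLinearMap.rank := by
  by_cases hyz : y = 0 ∧ z = 0
  · obtain ⟨rfl, rfl⟩ := hyz
    refine LinearMap.two_le_rank_of_det_ne_zero (1, 0, 0, 0) (0, 1, 0, 0) fun hdet => h ?_
    simp only [ContinuousLinearMap.coe_coe, fderiv_wrinkleModel_apply] at hdet
    exact ⟨rfl, rfl, by linear_combination hdet / 4⟩
  · refine LinearMap.two_le_rank_of_det_ne_zero (0, 0, 1, 0) (0, 0, 0, 1) fun hdet => hyz ?_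
    simp only [ContinuousLinearMap.coe_coe, fderiv_wrinkleModel_apply] at hdet
    obtain ⟨hy, hz⟩ := (add_eq_zero_iff_of_nonneg (sq_nonneg y) (sq_nonneg z)).1 <| by
      linear_combination hdet / 4
    exact ⟨pow_eq_zero_iff two_ne_zero |>.1 hy, pow_eq_zero_iff two_ne_zero |>.1 hz⟩

theorem rank_fderiv_wrinkleModel_lt_two {s t x : ℝ} (h : t ^ 2 + x ^ 2 + s / 2 * t = 0) :
    (fderiv ℝ (wrinkleModel s) (t, x, 0, 0)).toLinearMap.rank < 2 := by
  by_cases htx : (t, x) = 0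
  · obtain ⟨rfl, rfl⟩ := Prod.ext_iff.1 htx
    refine LinearMap.rank_lt_two_of_forall_mul_add_mul_eq_zero (a := 0) (b := 1) (by simp) ?_
    intro v
    simp [fderiv_wrinkleModel_apply]
  · refine LinearMap.rank_lt_two_of_forall_mul_add_mul_eq_zero htx fun v => ?_
    simp only [ContinuousLinearMap.coe_coe, fderiv_wrinkleModel_apply]
    linear_combination 2 * v.1 * h

theorem rank_fderiv_wrinkleModel_lt_two_iff (s t x y z : ℝ) :
    (fderiv ℝ (wrinkleModel s) (t, x, y, z)).toLinearMap.rank < 2 ↔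
      y = 0 ∧ z = 0 ∧ t ^ 2 + x ^ 2 + s / 2 * t = 0 := by
  refine ⟨fun h => ?_, ?_⟩
  · by_contra hc
    exact (two_le_rank_fderiv_wrinkleModel hc).not_gt h
  · rintro ⟨rfl, rfl, h⟩
    exact rank_fderiv_wrinkleModel_lt_two h

theorem Real.exists_mem_Icc_cos_eq_sin_eq {a b : ℝ} (h : a ^ 2 + b ^ 2 = 1) :
    ∃ θ ∈ Set.Icc 0 (2 * π), cos θ = a ∧ sin θ = b := by
  have ha : -1 ≤ a ∧ a ≤ 1 := abs_le.1 <| abs_le_one_iff_mul_self_le_one.2 <| by nlinarith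
  have hsin : sin (arccos a) = |b| := by
    rw [sin_arccos, ← sqrt_sq_eq_abs]
    congr 1
    linarith
  have := arccos_nonneg a
  have := arccos_le_pi a
  rcases le_or_gt 0 b with hb | hb
  · refine ⟨arccos a, ⟨by linarith, by linarith [pi_pos]⟩, cos_arccos ha.1 ha.2, ?_⟩
    rw [hsin, abs_of_nonneg hb]
  · refine ⟨2 * π - arccos a, ⟨by linarith, by linarith⟩, ?_, ?_⟩
    · rw [cos_two_pi_sub, cos_arccos ha.1 ha.2]
    · rw [sin_two_pi_sub, hsin, abs_of_neg hb, neg_neg]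

theorem exists_angle_of_critical_circle {s t x : ℝ} (hs : s ≠ 0)
    (h : t ^ 2 + x ^ 2 + s / 2 * t = 0) :
    ∃ θ ∈ Set.Icc 0 (2 * π), t = -(s / 4) * (1 + cos θ) ∧ x = s / 4 * sin θ := by
  obtain ⟨θ, hθ, hcos, hsin⟩ := Real.exists_mem_Icc_cos_eq_sin_eq (a := -4 * t / s - 1)
    (b := 4 * x / s) <| by
      field_simp
      linear_combination 16 * h
  refine ⟨θ, hθ, ?_, ?_⟩
  · rw [hcos]; field_simp; ring
  · rw [hsin]; field_simp

theorem wrinkleModel_critical_circle (s θ : ℝ) :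
    wrinkleModel s (-(s / 4) * (1 + cos θ), s / 4 * sin θ, 0, 0) =
      (-(s ^ 2 / 8) * (1 + cos θ) * (2 - cos θ), -(s ^ 2 / 8) * (1 + cos θ) * sin θ) := by
  simp only [wrinkleModel, Prod.mk.injEq]
  constructor
  · linear_combination (-(s ^ 2 / 16)) * sin_sq_add_cos_sq θ
  · ring

/-- For `s ≠ 0`, `F_s` maps the parametrized critical circle
`θ ↦ (−(s/4)(1+cos θ), (s/4) sin θ, 0, 0)` onto the parametrized closed curve
`θ ↦ (−(s²/8)(1+cos θ)(2−cos θ), −(s²/8)(1+cos θ) sin θ)`, and the image of the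
critical point set of `F_s` is exactly this curve. -/
theorem stmt6 (s : ℝ) (hs : s ≠ 0) :
    (∀ θ : ℝ,
      wrinkleModel s (-(s / 4) * (1 + Real.cos θ), (s / 4) * Real.sin θ, 0, 0) =
        (-(s ^ 2 / 8) * (1 + Real.cos θ) * (2 - Real.cos θ),
         -(s ^ 2 / 8) * (1 + Real.cos θ) * Real.sin θ)) ∧
    wrinkleModel s ''
        {p : ℝ × ℝ × ℝ × ℝ |
          LinearMap.rank (fderiv ℝ (wrinkleModel s) p).toLinearMap < 2} =
      {q : ℝ × ℝ | ∃ θ ∈ Set.Icc (0 : ℝ) (2 * π),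
        q = (-(s ^ 2 / 8) * (1 + Real.cos θ) * (2 - Real.cos θ),
             -(s ^ 2 / 8) * (1 + Real.cos θ) * Real.sin θ)} := by
  refine ⟨wrinkleModel_critical_circle s, Set.ext fun q => ⟨?_, ?_⟩⟩
  · rintro ⟨⟨t, x, y, z⟩, hp, rfl⟩
    obtain ⟨rfl, rfl, hcirc⟩ := (rank_fderiv_wrinkleModel_lt_two_iff s t x y z).1 hp
    obtain ⟨θ, hθ, rfl, rfl⟩ := exists_angle_of_critical_circle hs hcirc
    exact ⟨θ, hθ, wrinkleModel_critical_circle s θ⟩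
  · rintro ⟨θ, -, rfl⟩
    refine ⟨_, (rank_fderiv_wrinkleModel_lt_two_iff s _ _ 0 0).2 ⟨rfl, rfl, ?_⟩,
      wrinkleModel_critical_circle s θ⟩
    linear_combination s ^ 2 / 16 * sin_sq_add_cos_sq θ
end
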